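/- For integers m, n ≥ 0 and a primitive p-th root of unity ε with p odd > 1: if m ≡ −1 (mod p) or m + n < p then [m+n choose n]_ε ≠ 0 iff the ordinary binomial Lucas condition holds: [m+n choose n]_ε ≠ 0 if and only if n₀ ≤ (m+n)₀ (digit-wise base-p comparison of the lowest digits), where k = k₀ + p k₁ with 0 ≤ k₀ < p. -/

import Mathlib

/-!
Clearing denominators gives
`[m+n choose n]_q · q^{mn} · ∏_{i<n} (q^{2(i+1)} - 1) = ∏_{i<n} (q^{2(m+i+1)} - 1)`,
which becomes an identity of polynomials once the Laurent polynomial is multiplied by a power of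
`q`. Since `p` is odd, `ε` is a simple root of `q^{2k} - 1` when `p ∣ k` and no root otherwise,
so comparing multiplicities of the root `ε` gives `mult_ε + n / p + m / p = (m + n) / p`.
Hence the value at `ε` is nonzero iff adding `m` and `n` in base `p` carries nothing out of the
lowest digit, i.e. iff `n₀ ≤ (m+n)₀`.
-/

noncomputable section

/-- The field `ℂ(q)` of rational functions. -/
abbrev Fq : Type := RatFunc ℂ

/-- The indeterminate `q`. -/
def q : Fq := RatFunc.X

/-- The balanced quantum integer `[n]_q = (q^n - q^{-n})/(q - q^{-1})`. -/
def qint (n : ℤ) : Fq := (q ^ n - q ^ (-n)) / (q - q⁻¹)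

/-- The quantum factorial `[m]_q!`. -/
def qfact : ℕ → Fq
  | 0 => 1
  | n + 1 => qint (n + 1) * qfact n

/-- The balanced Gaussian binomial coefficient `[n choose k]_q`,
with the convention that it is `0` for `k < 0`. -/
def qbinom (n k : ℤ) : Fq :=
  if k < 0 then 0
  else (∏ i ∈ Finset.range k.toNat, qint (n - i)) / qfact k.toNat

open Polynomial Finset

theorem Nat.add_div_eq_add_div_iff_mod_le {p : ℕ} (hp : 0 < p) (m n : ℕ) :
    (m + n) / p = m / p + n / p ↔ n % p ≤ (m + n) % p := by
  have hdiv := Nat.add_div (a := m) (b := n) hp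
  have hmod := Nat.add_mod_add_ite m n p
  have hm := Nat.mod_lt m hp
  split_ifs at hdiv hmod <;> omega

theorem IsPrimitiveRoot.pow_two_mul_eq_one_iff {M : Type*} [CommMonoid M] {ε : M} {p : ℕ}
    (hε : IsPrimitiveRoot ε p) (hodd : Odd p) (k : ℕ) : ε ^ (2 * k) = 1 ↔ p ∣ k := by
  rw [hε.pow_eq_one_iff_dvd, hodd.coprime_two_right.dvd_mul_left]

theorem Polynomial.rootMultiplicity_X_pow_sub_one {K : Type*} [Field K] [CharZero K]
    [DecidableEq K] (x : K) {k : ℕ} (hk : k ≠ 0) :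
    (X ^ k - 1 : K[X]).rootMultiplicity x = if x ^ k = 1 then 1 else 0 := by
  have hsep : (X ^ k - 1 : K[X]).Separable :=
    X_pow_sub_one_separable_iff.mpr (by exact_mod_cast hk)
  split_ifs with h
  · have hpos := (rootMultiplicity_pos hsep.ne_zero).mpr (by simp [h] : (X ^ k - 1 : K[X]).IsRoot x)
    have hle := rootMultiplicity_le_one_of_separable hsep x
    omega
  · exact rootMultiplicity_eq_zero (by simp [sub_eq_zero, h])

theorem Polynomial.rootMultiplicity_X_pow_mul {K : Type*} [Field K] {x : K} (hx : x ≠ 0)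
    (k : ℕ) (g : K[X]) : (X ^ k * g).rootMultiplicity x = g.rootMultiplicity x := by
  rcases eq_or_ne g 0 with rfl | hg
  · simp
  rw [rootMultiplicity_mul (mul_ne_zero (pow_ne_zero _ X_ne_zero) hg),
    rootMultiplicity_eq_zero (by simp [hx]), zero_add]

/-- At `X = q` this is `(-1)ⁿ (q^{2m+2}; q²)ₙ`. -/
def qPoch (R : Type*) [CommRing R] (m n : ℕ) : R[X] :=
  ∏ i ∈ range n, (X ^ (2 * (m + i + 1)) - 1)

theorem qPoch_ne_zero {R : Type*} [CommRing R] [IsDomain R] (m n : ℕ) : qPoch R m n ≠ 0 :=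
  prod_ne_zero_iff.mpr fun _ _ => by simpa using X_pow_sub_C_ne_zero (by omega) (1 : R)

theorem qPoch_succ (R : Type*) [CommRing R] (m n : ℕ) :
    qPoch R m (n + 1) = qPoch R m n * (X ^ (2 * (m + n + 1)) - 1) :=
  prod_range_succ ..

theorem rootMultiplicity_qPoch {K : Type*} [Field K] [CharZero K] {p : ℕ} (hodd : Odd p)
    {ε : K} (hε : IsPrimitiveRoot ε p) (m n : ℕ) :
    (qPoch K m n).rootMultiplicity ε + m / p = (m + n) / p := by
  induction n with
  | zero => simp [qPoch]
  | succ n ih =>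
    classical
    rw [qPoch_succ, rootMultiplicity_mul (mul_ne_zero (qPoch_ne_zero m n) ?_),
      rootMultiplicity_X_pow_sub_one ε (by omega), hε.pow_two_mul_eq_one_iff hodd,
      ← add_assoc m, Nat.succ_div]
    · split_ifs <;> omega
    · simpa using X_pow_sub_C_ne_zero (by omega) (1 : K)

theorem q_ne_zero : q ≠ 0 := RatFunc.X_ne_zero

theorem aeval_q_injective : Function.Injective (aeval q : ℂ[X] → Fq) := by
  intro f g h
  simp only [q, RatFunc.aeval_X_left_eq_algebraMap] at h
  exact RatFunc.algebraMap_injective ℂ h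

theorem aeval_q_qPoch_ne_zero (m n : ℕ) : aeval q (qPoch ℂ m n) ≠ 0 :=
  (map_ne_zero_iff _ aeval_q_injective).mpr (qPoch_ne_zero m n)

theorem q_sub_q_inv_ne_zero : q - q⁻¹ ≠ 0 := by
  have h : (q - q⁻¹) * q = aeval q (X ^ 2 - 1 : ℂ[X]) := by
    simp [sub_mul, inv_mul_cancel₀ q_ne_zero, sq]
  refine left_ne_zero_of_mul (h ▸ (map_ne_zero_iff _ aeval_q_injective).mpr ?_)
  simpa using X_pow_sub_C_ne_zero two_pos (1 : ℂ)

theorem qint_mul (k : ℕ) : qint k * ((q - q⁻¹) * q ^ k) = q ^ (2 * k) - 1 := by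
  rw [← mul_assoc, qint, div_mul_cancel₀ _ q_sub_q_inv_ne_zero, zpow_neg, zpow_natCast, sub_mul,
    inv_mul_cancel₀ (pow_ne_zero _ q_ne_zero), ← pow_add, two_mul]

theorem qfact_eq_prod (n : ℕ) : qfact n = ∏ i ∈ range n, qint (i + 1 : ℕ) := by
  induction n with
  | zero => rfl
  | succ n ih => rw [prod_range_succ, ← ih, mul_comm, qfact]; push_cast; rfl

theorem prod_qint_mul (m n : ℕ) :
    (∏ i ∈ range n, qint (m + i + 1 : ℕ)) * ((q - q⁻¹) ^ n * q ^ (∑ i ∈ range n, (m + i + 1)))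
      = aeval q (qPoch ℂ m n) := by
  rw [← card_range n, ← prod_const, card_range, ← prod_pow_eq_pow_sum, ← prod_mul_distrib,
    ← prod_mul_distrib, qPoch, map_prod]
  refine prod_congr rfl fun i _ => ?_
  rw [qint_mul]
  simp

theorem qbinom_eq_div (m n : ℕ) :
    qbinom (m + n) n = (∏ i ∈ range n, qint (m + i + 1 : ℕ)) / ∏ i ∈ range n, qint (i + 1 : ℕ) := by
  rw [qbinom, if_neg (by omega), Int.toNat_natCast, qfact_eq_prod, ← prod_range_reflect]
  congr 1
  refine prod_congr rfl fun i hi => ?_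
  have := mem_range.mp hi
  congr 1
  omega

theorem qbinom_mul_aeval_qPoch (m n : ℕ) :
    qbinom (m + n) n * q ^ (m * n) * aeval q (qPoch ℂ 0 n) = aeval q (qPoch ℂ m n) := by
  have hsum : ∑ i ∈ range n, (m + i + 1) = m * n + ∑ i ∈ range n, (0 + i + 1) := by
    simp [sum_add_distrib, add_assoc, mul_comm]
  have hden := prod_qint_mul 0 n
  have hden0 : ∏ i ∈ range n, qint (0 + i + 1 : ℕ) ≠ 0 :=
    left_ne_zero_of_mul (hden ▸ aeval_q_qPoch_ne_zero 0 n)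
  rw [← hden, ← prod_qint_mul m, hsum, pow_add, qbinom_eq_div]
  simp only [zero_add] at hden0 ⊢
  field_simp

theorem LaurentPolynomial.eval₂_ofCoeff_mk0 {R K : Type*} [CommSemiring R] [Field K]
    (φ : R →+* K) {x : K} (hx : x ≠ 0) (c : ℤ →₀ R) :
    eval₂ φ (Units.mk0 x hx) (AddMonoidAlgebra.ofCoeff c) = c.sum fun i a => φ a * x ^ i := by
  conv_lhs => rw [← c.sum_single, Finsupp.sum, AddMonoidAlgebra.ofCoeff_sum]
  simp [Finsupp.sum, single_eq_C_mul_T]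

theorem qbinom_nonzero_iff_general (p : ℕ) (hodd : Odd p)
    (ε : ℂ) (hε : IsPrimitiveRoot ε p) (m n : ℕ) (c : ℤ →₀ ℂ)
    (hc : qbinom ((m : ℤ) + n) n = c.sum fun i a => algebraMap ℂ Fq a * q ^ i) :
    (c.sum fun i a => a * ε ^ i) ≠ 0 ↔ n % p ≤ (m + n) % p := by
  have hε0 : ε ≠ 0 := hε.ne_zero hodd.pos.ne'
  obtain ⟨N, f, hf⟩ := LaurentPolynomial.exists_T_pow (AddMonoidAlgebra.ofCoeff c)
  have hf_eval (K : Type) [Field K] (φ : ℂ →+* K) (x : K) (hx : x ≠ 0) :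
      f.eval₂ φ x = (c.sum fun i a => φ a * x ^ i) * x ^ N := by
    simpa [LaurentPolynomial.eval₂_ofCoeff_mk0] using
      congrArg (LaurentPolynomial.eval₂ φ (Units.mk0 x hx)) hf
  have hpoly : X ^ (m * n) * (f * qPoch ℂ 0 n) = X ^ N * qPoch ℂ m n := by
    apply aeval_q_injective
    simp only [map_mul, map_pow, aeval_X]
    rw [← qbinom_mul_aeval_qPoch m n, hc, aeval_def, hf_eval Fq _ q q_ne_zero]
    ring
  have hf0 : f ≠ 0 := by
    rintro rfl
    simp [qPoch_ne_zero] at hpoly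
  have hrm : f.rootMultiplicity ε + n / p + m / p = (m + n) / p := by
    have := congrArg (rootMultiplicity ε) hpoly
    rw [rootMultiplicity_X_pow_mul hε0, rootMultiplicity_X_pow_mul hε0,
      rootMultiplicity_mul (mul_ne_zero hf0 (qPoch_ne_zero 0 n))] at this
    have h0 := rootMultiplicity_qPoch hodd hε 0 n
    have hm := rootMultiplicity_qPoch hodd hε m n
    simp only [Nat.zero_div, add_zero, zero_add] at h0
    omega
  have hfε := hf_eval ℂ (RingHom.id ℂ) ε hε0
  simp only [eval₂_id, RingHom.id_apply] at hfε
  rw [← Nat.add_div_eq_add_div_iff_mod_le hodd.pos, ← (mul_ne_zero_iff_right (pow_ne_zero N hε0)),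
    ← hfε, Ne, ← IsRoot.def, ← rootMultiplicity_pos hf0]
  omega

/-- For `m, n ≥ 0` and `ε` a primitive `p`-th root of unity (`p` odd `> 1`):
if `m ≡ -1 (mod p)` or `m + n < p`, then the value at `q = ε` of the Laurent
polynomial `[m+n choose n]_q = ∑ i, cᵢ qⁱ` is nonzero if and only if
`n₀ ≤ (m+n)₀`, where `k₀ = k % p` is the lowest base-`p` digit. -/
theorem qbinom_nonzero_iff (p : ℕ) (hodd : Odd p) (hp : 1 < p)
    (ε : ℂ) (hε : IsPrimitiveRoot ε p) (m n : ℕ)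
    (hmn : m % p = p - 1 ∨ m + n < p) (c : ℤ →₀ ℂ)
    (hc : qbinom ((m : ℤ) + n) n = c.sum fun i a => algebraMap ℂ Fq a * q ^ i) :
    (c.sum fun i a => a * ε ^ i) ≠ 0 ↔ n % p ≤ (m + n) % p :=
  qbinom_nonzero_iff_general p hodd ε hε m n c hc
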